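/- The relative condition number of robustly r-identifiable tensors is bounded below by d^{-1}: if p ∈ F^{r(Σ+d)} is a nonzero norm-balanced representative vector (i.e., within each block b_i = (a_i^{(1)}, …, a_i^{(d)}) all factor norms ‖a_i^{(1)}‖ = ⋯ = ‖a_i^{(d)}‖ are equal) and Terracini's matrix T_p has rank N = r(Σ+1), then ς_N(T_p)^{-1} · ‖f(p)‖ / ‖p‖ ≥ 1/d. -/

import Mathlib

/-!
Euler's identity for the degree-`d` map `f` gives `T_p p = d · f(p)`, so it suffices to show
`ς_N(T_p) ‖p‖ ≤ ‖T_p p‖`. This holds for every vector orthogonal to `ker T_p`, since `T_pᴴ T_p`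
has exactly `N` nonzero eigenvalues, all at least `ς_N²`. The vectors `k_i^{(k)}`, which rescale
`a_i^{(1)}` and `a_i^{(k)}` in opposite directions, lie in `ker T_p`; under norm balance they are
orthogonal to `p`. When every factor is nonzero they are linearly independent, hence span the
kernel, whose dimension is `r(Σ+d) - N = r(d-1)`. A zero factor would, by norm balance, kill a
whole block `T_i` and force `rank T_p ≤ Σ_i rank T_i ≤ (r-1)(Σ+1) < N`.
-/

open scoped BigOperators
open scoped Matrix

noncomputable section

namespace TensorCond

variable {𝕜 : Type*} [RCLike 𝕜]
variable {d r : ℕ} {n : Fin d → ℕ}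

/-- The space `F^{r(Σ+d)}` of vectorized factor matrices: `r` blocks,
each consisting of `d` factors `a_i^{(k)} ∈ F^{n_k}`. -/
abbrev Vecr (𝕜 : Type*) (d r : ℕ) (n : Fin d → ℕ) : Type _ :=
  Fin r → (k : Fin d) → Fin (n k) → 𝕜

/-- The tensor space `F^{n₁} ⊗ ⋯ ⊗ F^{n_d} ≅ F^Π`. -/
abbrev Tensor (𝕜 : Type*) (d : ℕ) (n : Fin d → ℕ) : Type _ :=
  ((k : Fin d) → Fin (n k)) → 𝕜

/-- Column index of Terracini's matrix. -/
abbrev ColIdx (d r : ℕ) (n : Fin d → ℕ) : Type _ :=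
  Fin r × Σ k : Fin d, Fin (n k)

/-- The tensor computation map `f`. -/
def tmap (p : Vecr 𝕜 d r n) : Tensor 𝕜 d n :=
  fun x => ∑ i, ∏ k, p i k (x k)

/-- Terracini's matrix `T_p`. -/
def terracini (p : Vecr 𝕜 d r n) :
    Matrix ((k : Fin d) → Fin (n k)) (ColIdx d r n) 𝕜 :=
  Matrix.of fun x q =>
    (if x q.2.1 = q.2.2 then (1 : 𝕜) else 0) *
      ∏ l ∈ Finset.univ.erase q.2.1, p q.1 l (x l)

/-- Flattening of a representative vector. -/
def flat (p : Vecr 𝕜 d r n) : ColIdx d r n → 𝕜 :=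
  fun q => p q.1 q.2.1 q.2.2

/-- Flattening as a linear map. -/
def flatLM (𝕜 : Type*) [RCLike 𝕜] (d r : ℕ) (n : Fin d → ℕ) :
    Vecr 𝕜 d r n →ₗ[𝕜] (ColIdx d r n → 𝕜) where
  toFun := flat
  map_add' _ _ := rfl
  map_smul' _ _ := rfl

/-- Euclidean norm of a finitely supported vector. -/
def eunorm {ι : Type*} [Fintype ι] (v : ι → 𝕜) : ℝ :=
  Real.sqrt (∑ i, ‖v i‖ ^ 2)

/-- Euclidean norm of one block. -/
def bnorm (b : (k : Fin d) → Fin (n k) → 𝕜) : ℝ :=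
  Real.sqrt (∑ k, ∑ j, ‖b k j‖ ^ 2)

/-- Euclidean norm on `F^{r(Σ+d)}`. -/
def vnorm (p : Vecr 𝕜 d r n) : ℝ :=
  Real.sqrt (∑ i, ∑ k, ∑ j, ‖p i k j‖ ^ 2)

/-- Euclidean (Frobenius) norm on the tensor space. -/
def tnorm (A : Tensor 𝕜 d n) : ℝ :=
  Real.sqrt (∑ x, ‖A x‖ ^ 2)

/-- Scaling part of the group `𝒯`. -/
def IsScaling (s : Fin r → Fin d → 𝕜) : Prop :=
  (∀ i k, s i k ≠ 0) ∧ ∀ i, ∏ k, s i k = 1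

/-- Action of an element of `𝒯`. -/
def act (π : Equiv.Perm (Fin r)) (s : Fin r → Fin d → 𝕜) (q : Vecr 𝕜 d r n) :
    Vecr 𝕜 d r n :=
  fun i k j => s i k * q (π i) k j

/-- `p ∼ q`. -/
def rel (p q : Vecr 𝕜 d r n) : Prop :=
  ∃ (π : Equiv.Perm (Fin r)) (s : Fin r → Fin d → 𝕜), IsScaling s ∧ p = act π s q

/-- The distance measure `d(p,q) = inf_{T ∈ 𝒯} ‖p − Tq‖`. -/
def gdist (p q : Vecr 𝕜 d r n) : ℝ :=
  sInf { x | ∃ (π : Equiv.Perm (Fin r)) (s : Fin r → Fin d → 𝕜),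
    IsScaling s ∧ x = vnorm (p - act π s q) }

/-- Tensors of rank at most `r`. -/
def SecZ (𝕜 : Type*) [RCLike 𝕜] (d r : ℕ) (n : Fin d → ℕ) : Set (Tensor 𝕜 d n) :=
  Set.range (tmap (𝕜 := 𝕜) (d := d) (r := r) (n := n))

/-- `r`-identifiability. -/
def Identifiable {𝕜 : Type*} [RCLike 𝕜] {d : ℕ} {n : Fin d → ℕ} (r : ℕ)
    (A : Tensor 𝕜 d n) : Prop :=
  ∀ x y : Vecr 𝕜 d r n, tmap x = A → tmap y = A → rel x y

/-- `d(p, f†(A))`. -/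
def fdist (p : Vecr 𝕜 d r n) (A : Tensor 𝕜 d n) : ℝ :=
  sInf { x | ∃ q : Vecr 𝕜 d r n, tmap q = A ∧ x = gdist p q }

/-- Multiset of singular values of a matrix. -/
def singularValues {m l : Type*} [Fintype m] [Fintype l] [DecidableEq l]
    (M : Matrix m l 𝕜) : Multiset ℝ :=
  Multiset.map
    (fun i => Real.sqrt ((Matrix.isHermitian_conjTranspose_mul_self M).eigenvalues i))
    Finset.univ.val

/-- `j`-th largest singular value (1-indexed). -/
def nthSV {m l : Type*} [Fintype m] [Fintype l] [DecidableEq l]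
    (M : Matrix m l 𝕜) (j : ℕ) : ℝ :=
  (((singularValues M).sort (· ≤ ·)).reverse).getD (j - 1) 0

/-- Spectral norm. -/
def specNorm {m l : Type*} [Fintype m] [Fintype l] (M : Matrix m l 𝕜) : ℝ :=
  sSup { x | ∃ v : l → 𝕜, eunorm v = 1 ∧ x = eunorm (M.mulVec v) }

/-- Kernel vector `k_i^{(k)}` (one block). -/
def kvec [NeZero d] (p : Vecr 𝕜 d r n) (i : Fin r) (k : Fin d) :
    (l : Fin d) → Fin (n l) → 𝕜 :=
  fun l j =>
    if h0 : l = 0 then p i 0 (h0 ▸ j)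
    else if hk : l = k then -(p i k (hk ▸ j)) else 0

/-- Kernel basis vector `k_i^{(k)} ⊗ e_i` as a flattened column vector. -/
def kcol [NeZero d] (p : Vecr 𝕜 d r n) (i : Fin r) (k : Fin d) :
    ColIdx d r n → 𝕜 :=
  fun q => if q.1 = i then kvec p i k q.2.1 q.2.2 else 0

/-- `P ⊗ I_{Σ+d}` for a permutation `π`. -/
def permMx (𝕜 : Type*) [RCLike 𝕜] (d r : ℕ) (n : Fin d → ℕ)
    (π : Equiv.Perm (Fin r)) : Matrix (ColIdx d r n) (ColIdx d r n) 𝕜 :=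
  Matrix.of fun x y => if y.1 = π x.1 ∧ x.2 = y.2 then 1 else 0

/-- Block diagonal scaling matrix `diag(D_1, …, D_r)`. -/
def scalMx (s : Fin r → Fin d → 𝕜) : Matrix (ColIdx d r n) (ColIdx d r n) 𝕜 :=
  Matrix.diagonal fun x => s x.1 x.2.1

/-- The set `𝒯 = 𝒫ℬ` of matrices. -/
def Tset (𝕜 : Type*) [RCLike 𝕜] (d r : ℕ) (n : Fin d → ℕ) :
    Set (Matrix (ColIdx d r n) (ColIdx d r n) 𝕜) :=
  { M | ∃ (π : Equiv.Perm (Fin r)) (s : Fin r → Fin d → 𝕜),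
      IsScaling s ∧ M = permMx 𝕜 d r n π * scalMx s }

/-- The `i`-th block `T_i` of Terracini's matrix. -/
def terraciniBlock (p : Vecr 𝕜 d r n) (i : Fin r) :
    Matrix ((k : Fin d) → Fin (n k)) (Σ k : Fin d, Fin (n k)) 𝕜 :=
  Matrix.of fun x q =>
    (if x q.1 = q.2 then (1 : 𝕜) else 0) * ∏ l ∈ Finset.univ.erase q.1, p i l (x l)

/-- Kernel-basis matrix `K = [k^{(2)} ⋯ k^{(d)}]` (single point, r = 1). -/
def Kmx [NeZero d] (a : (k : Fin d) → Fin (n k) → 𝕜) :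
    Matrix (Σ k : Fin d, Fin (n k)) {k : Fin d // k ≠ 0} 𝕜 :=
  Matrix.of fun q j => kvec (fun _ : Fin 1 => a) 0 j.1 q.1 q.2

open scoped InnerProductSpace

section Euclidean

variable {ι : Type*} [Fintype ι]

lemma eunorm_eq_norm_toLp (v : ι → 𝕜) :
    eunorm v = ‖(WithLp.toLp 2 v : EuclideanSpace 𝕜 ι)‖ := by
  rw [EuclideanSpace.norm_eq]
  rfl

lemma eunorm_eq_zero {v : ι → 𝕜} : eunorm v = 0 ↔ v = 0 := by
  rw [eunorm_eq_norm_toLp, norm_eq_zero, WithLp.toLp_eq_zero]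

lemma eunorm_sq (v : ι → 𝕜) : eunorm v ^ 2 = ∑ i, ‖v i‖ ^ 2 :=
  Real.sq_sqrt (by positivity)

lemma eunorm_smul (c : 𝕜) (v : ι → 𝕜) : eunorm (c • v) = ‖c‖ * eunorm v := by
  rw [eunorm_eq_norm_toLp, eunorm_eq_norm_toLp, WithLp.toLp_smul, norm_smul]

end Euclidean

theorem _root_.List.SortedGE.lt_getElem_iff_lt_countP {α : Type*} [LinearOrder α] {R : List α}
    (hR : R.SortedGE) (a : α) {j : ℕ} (hj : j < R.length) :
    a < R[j] ↔ j < R.countP (a < ·) := by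
  constructor
  · intro hpos
    have htake : (R.take (j + 1)).countP (a < ·) = j + 1 := by
      rw [List.countP_eq_length.mpr, List.length_take_of_le hj]
      intro x hx
      obtain ⟨i, hi, rfl⟩ := List.getElem_of_mem hx
      simp only [List.getElem_take, List.length_take] at hi ⊢
      exact decide_eq_true (hpos.trans_le (hR.getElem_ge_getElem_of_le (by omega)))
    have hsub := (List.take_sublist (j + 1) R).countP_le (p := (a < ·))
    omega
  · intro hlt
    by_contra hle
    push Not at hle
    have hdrop : (R.drop j).countP (a < ·) = 0 := by
      rw [List.countP_eq_zero]
      intro x hx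
      obtain ⟨i, hi, rfl⟩ := List.getElem_of_mem hx
      simp only [List.getElem_drop, List.length_drop] at hi ⊢
      simpa using (hR.getElem_ge_getElem_of_le (Nat.le_add_right j i)).trans hle
    have hsplit := List.countP_append (l₁ := R.take j) (l₂ := R.drop j) (p := (a < ·))
    rw [List.take_append_drop, hdrop] at hsplit
    have htake := List.countP_le_length (l := R.take j) (p := (a < ·))
    rw [List.length_take] at htake
    omega

section SingularValues

variable {m l : Type*} [Fintype m] [Fintype l] [DecidableEq l]

theorem _root_.Matrix.IsHermitian.inner_mulVec_eq_sum {A : Matrix l l 𝕜} (hA : A.IsHermitian)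
    (v : l → 𝕜) :
    ⟪WithLp.toLp 2 v, WithLp.toLp 2 (A *ᵥ v)⟫_𝕜 =
      ∑ i, (hA.eigenvalues i : 𝕜) * (‖⟪hA.eigenvectorBasis i, WithLp.toLp 2 v⟫_𝕜‖ : 𝕜) ^ 2 := by
  rw [← hA.eigenvectorBasis.sum_inner_mul_inner]
  refine Finset.sum_congr rfl fun i _ => ?_
  have hsymm := Matrix.isSymmetric_toEuclideanLin_iff.mpr hA (hA.eigenvectorBasis i)
    (WithLp.toLp 2 v)
  rw [Matrix.toLpLin_apply, Matrix.toLpLin_apply, hA.mulVec_eigenvectorBasis] at hsymm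
  rw [← hsymm, WithLp.toLp_smul, WithLp.toLp_ofLp, RCLike.real_smul_eq_coe_smul (K := 𝕜),
    inner_smul_left, RCLike.conj_ofReal, ← inner_conj_symm (WithLp.toLp 2 v), ← RCLike.conj_mul]
  ring

lemma eunorm_mulVec_sq (M : Matrix m l 𝕜) (v : l → 𝕜) :
    eunorm (M *ᵥ v) ^ 2 = ∑ i, (Matrix.isHermitian_conjTranspose_mul_self M).eigenvalues i *
      ‖⟪(Matrix.isHermitian_conjTranspose_mul_self M).eigenvectorBasis i,
        WithLp.toLp 2 v⟫_𝕜‖ ^ 2 := by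
  apply RCLike.ofReal_injective (K := 𝕜)
  push_cast
  rw [← Matrix.IsHermitian.inner_mulVec_eq_sum, eunorm_eq_norm_toLp, ← inner_self_eq_norm_sq_to_K,
    EuclideanSpace.inner_toLp_toLp, EuclideanSpace.inner_toLp_toLp, ← Matrix.mulVec_mulVec,
    dotProduct_comm _ (star v), Matrix.dotProduct_mulVec, ← Matrix.star_mulVec, dotProduct_comm]

def sortedSingularValues (M : Matrix m l 𝕜) : List ℝ :=
  ((singularValues M).sort (· ≤ ·)).reverse

lemma nthSV_eq_getD (M : Matrix m l 𝕜) (j : ℕ) :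
    nthSV M j = (sortedSingularValues M).getD (j - 1) 0 :=
  rfl

lemma mem_sortedSingularValues {M : Matrix m l 𝕜} {x : ℝ} :
    x ∈ sortedSingularValues M ↔ x ∈ singularValues M := by
  simp [sortedSingularValues]

lemma sortedGE_sortedSingularValues (M : Matrix m l 𝕜) : (sortedSingularValues M).SortedGE :=
  List.sortedGE_reverse.mpr (List.sortedLE_iff_pairwise.mpr (Multiset.pairwise_sort _ _))

open scoped ComplexOrder in
lemma countP_pos_sortedSingularValues (M : Matrix m l 𝕜) :
    (sortedSingularValues M).countP (0 < ·) = M.rank := by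
  rw [sortedSingularValues, List.countP_reverse, ← Multiset.coe_countP, Multiset.sort_eq,
    singularValues, Multiset.countP_map, ← Finset.filter_val, ← Finset.card_def,
    ← Matrix.rank_conjTranspose_mul_self,
    (Matrix.isHermitian_conjTranspose_mul_self M).rank_eq_card_non_zero_eigs, Fintype.card_subtype]
  congr 1
  ext i
  simp [Real.sqrt_pos, (Matrix.eigenvalues_conjTranspose_mul_self_nonneg M i).lt_iff_ne', ne_comm]

lemma rank_le_length_sortedSingularValues (M : Matrix m l 𝕜) :
    M.rank ≤ (sortedSingularValues M).length :=
  countP_pos_sortedSingularValues M ▸ List.countP_le_length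

lemma nthSV_nonneg (M : Matrix m l 𝕜) (j : ℕ) : 0 ≤ nthSV M j := by
  rw [nthSV_eq_getD, List.getD_eq_getElem?_getD]
  cases h : (sortedSingularValues M)[j - 1]? with
  | none => exact le_rfl
  | some x =>
    obtain ⟨i, -, rfl⟩ :=
      Multiset.mem_map.mp (mem_sortedSingularValues.mp (List.mem_of_getElem? h))
    exact Real.sqrt_nonneg _

theorem nthSV_rank_pos (M : Matrix m l 𝕜) (hM : M.rank ≠ 0) : 0 < nthSV M M.rank := by
  have hlen := rank_le_length_sortedSingularValues M
  rw [nthSV_eq_getD, List.getD_eq_getElem _ _ (by omega),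
    (sortedGE_sortedSingularValues M).lt_getElem_iff_lt_countP 0, countP_pos_sortedSingularValues]
  omega

theorem nthSV_rank_le (M : Matrix m l 𝕜) {x : ℝ} (hx : x ∈ singularValues M) (hx0 : 0 < x) :
    nthSV M M.rank ≤ x := by
  obtain ⟨j, hj, rfl⟩ := List.getElem_of_mem (mem_sortedSingularValues.mpr hx)
  have hjr := ((sortedGE_sortedSingularValues M).lt_getElem_iff_lt_countP 0 hj).mp hx0
  rw [countP_pos_sortedSingularValues] at hjr
  have hlen := rank_le_length_sortedSingularValues M
  rw [nthSV_eq_getD, List.getD_eq_getElem _ _ (by omega)]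
  exact (sortedGE_sortedSingularValues M).getElem_ge_getElem_of_le (by omega)

open scoped ComplexOrder in
theorem nthSV_rank_mul_eunorm_le (M : Matrix m l 𝕜) (v : l → 𝕜)
    (hv : ∀ w, M *ᵥ w = 0 → star w ⬝ᵥ v = 0) :
    nthSV M M.rank * eunorm v ≤ eunorm (M *ᵥ v) := by
  set hA := Matrix.isHermitian_conjTranspose_mul_self M
  have hterm : ∀ i, nthSV M M.rank ^ 2 * ‖⟪hA.eigenvectorBasis i, WithLp.toLp 2 v⟫_𝕜‖ ^ 2 ≤
      hA.eigenvalues i * ‖⟪hA.eigenvectorBasis i, WithLp.toLp 2 v⟫_𝕜‖ ^ 2 := by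
    intro i
    have hμ := Matrix.eigenvalues_conjTranspose_mul_self_nonneg M i
    by_cases hi : hA.eigenvalues i = 0
    · have hker : M *ᵥ hA.eigenvectorBasis i = 0 := by
        rw [← Matrix.conjTranspose_mul_self_mulVec_eq_zero, hA.mulVec_eigenvectorBasis, hi,
          zero_smul]
      rw [EuclideanSpace.inner_eq_star_dotProduct, dotProduct_comm, hv _ hker]
      simp
    · have hsqrt : nthSV M M.rank ≤ √(hA.eigenvalues i) :=
        nthSV_rank_le M (Multiset.mem_map_of_mem _ (Finset.mem_univ_val i))
          (Real.sqrt_pos.mpr (hμ.lt_of_ne' hi))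
      gcongr
      calc nthSV M M.rank ^ 2 ≤ √(hA.eigenvalues i) ^ 2 := by gcongr; exact nthSV_nonneg M _
        _ = hA.eigenvalues i := Real.sq_sqrt hμ
  refine le_of_pow_le_pow_left₀ two_ne_zero (Real.sqrt_nonneg _) ?_
  rw [mul_pow, eunorm_mulVec_sq, eunorm_eq_norm_toLp,
    ← hA.eigenvectorBasis.sum_sq_norm_inner_right, Finset.mul_sum]
  exact Finset.sum_le_sum fun i _ => hterm i

end SingularValues

section Terracini

lemma tnorm_eq_eunorm (A : Tensor 𝕜 d n) : tnorm A = eunorm A :=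
  rfl

lemma vnorm_eq_eunorm_flat (p : Vecr 𝕜 d r n) : vnorm p = eunorm (flat p) := by
  simp only [vnorm, eunorm, Fintype.sum_prod_type, ← Finset.univ_sigma_univ, Finset.sum_sigma]
  rfl

lemma vnorm_pos {p : Vecr 𝕜 d r n} (hp : p ≠ 0) : 0 < vnorm p := by
  rw [vnorm_eq_eunorm_flat]
  refine (Real.sqrt_nonneg _).lt_of_ne' (eunorm_eq_zero.not.mpr fun h => hp ?_)
  funext i k j
  exact congrFun h (i, ⟨k, j⟩)

lemma card_colIdx (hn : ∀ k, n k ≠ 0) :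
    Fintype.card (ColIdx d r n) = r * (∑ k, (n k - 1) + d) := by
  simp only [Fintype.card_prod, Fintype.card_fin, Fintype.card_sigma]
  congr 1
  rw [← Fintype.sum_congr _ _ fun k => Nat.sub_add_cancel (Nat.one_le_iff_ne_zero.mpr (hn k)),
    Finset.sum_add_distrib]
  simp

lemma terracini_mulVec_apply (p : Vecr 𝕜 d r n) (u : ColIdx d r n → 𝕜)
    (x : (k : Fin d) → Fin (n k)) :
    (terracini p *ᵥ u) x =
      ∑ i, ∑ k, (∏ l ∈ Finset.univ.erase k, p i l (x l)) * u (i, ⟨k, x k⟩) := by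
  simp [Matrix.mulVec, dotProduct, terracini, Fintype.sum_prod_type, ← Finset.univ_sigma_univ,
    Finset.sum_sigma, ite_mul]

theorem terracini_mulVec_flat (p : Vecr 𝕜 d r n) :
    terracini p *ᵥ flat p = (d : 𝕜) • tmap p := by
  ext x
  simp [terracini_mulVec_apply, flat, Finset.prod_erase_mul, tmap, Finset.mul_sum]

lemma terracini_mulVecLin_eq_sum (p : Vecr 𝕜 d r n) :
    (terracini p).mulVecLin =
      ∑ i, (terraciniBlock p i).mulVecLin ∘ₗ LinearMap.funLeft 𝕜 𝕜 fun σ => (i, σ) := by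
  ext u x
  simp [Matrix.mulVec, dotProduct, Fintype.sum_prod_type, terracini, terraciniBlock]

theorem rank_terracini_le_sum (p : Vecr 𝕜 d r n) :
    (terracini p).rank ≤ ∑ i, (terraciniBlock p i).rank := by
  have h : (terracini p).mulVecLin.rank ≤ ∑ i, (terraciniBlock p i).mulVecLin.rank := by
    rw [terracini_mulVecLin_eq_sum]
    exact (LinearMap.rank_finsetSum_le _ _).trans
      (Finset.sum_le_sum fun i _ => LinearMap.rank_comp_le_left _ _)
  simp only [LinearMap.rank, ← Module.finrank_eq_rank] at h
  exact_mod_cast h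

lemma terraciniBlock_eq_submatrix (p : Vecr 𝕜 d r n) (i : Fin r) :
    terraciniBlock p i = (terracini fun _ : Fin 1 => p i).submatrix (Equiv.refl _)
      (Equiv.uniqueProd _ (Fin 1)).symm :=
  rfl

lemma terraciniBlock_eq_zero (hd : 2 ≤ d) (p : Vecr 𝕜 d r n) {i : Fin r}
    (hi : ∀ k, p i k = 0) : terraciniBlock p i = 0 := by
  have := Fin.nontrivial_iff_two_le.mpr hd
  ext x σ
  obtain ⟨l, hl⟩ := exists_ne σ.1
  rw [terraciniBlock, Matrix.of_apply, Matrix.zero_apply,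
    Finset.prod_eq_zero (Finset.mem_erase.mpr ⟨hl, Finset.mem_univ l⟩) (by rw [hi l]; rfl),
    mul_zero]

variable [NeZero d]

lemma kvec_zero (p : Vecr 𝕜 d r n) (i : Fin r) (k : Fin d) (j : Fin (n 0)) :
    kvec p i k 0 j = p i 0 j := by
  simp [kvec]

lemma kvec_self (p : Vecr 𝕜 d r n) (i : Fin r) {k : Fin d} (hk : k ≠ 0)
    (j : Fin (n k)) : kvec p i k k j = -p i k j := by
  simp [kvec, hk]

lemma kvec_of_ne (p : Vecr 𝕜 d r n) (i : Fin r) {k l : Fin d} (hl0 : l ≠ 0) (hlk : l ≠ k)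
    (j : Fin (n l)) : kvec p i k l j = 0 := by
  simp [kvec, hl0, hlk]

theorem terracini_mulVec_kcol (p : Vecr 𝕜 d r n) (i : Fin r) {k : Fin d} (hk : k ≠ 0) :
    terracini p *ᵥ kcol p i k = 0 := by
  ext x
  rw [terracini_mulVec_apply, Fintype.sum_eq_single i (fun i' hi' => by simp [kcol, hi']),
    Fintype.sum_eq_add 0 k hk.symm (fun l ⟨hl0, hlk⟩ => by simp [kcol, kvec_of_ne p i hl0 hlk])]
  simp [kcol, kvec_zero, kvec_self p i hk, Finset.prod_erase_mul]

theorem linearIndependent_kcol (p : Vecr 𝕜 d r n) (hp : ∀ i k, p i k ≠ 0) :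
    LinearIndependent 𝕜 fun z : Fin r × {k : Fin d // k ≠ 0} => kcol p z.1 z.2 := by
  rw [Fintype.linearIndependent_iff]
  rintro c hc ⟨i, k, hk⟩
  obtain ⟨j, hj⟩ : ∃ j, p i k j ≠ 0 := Function.ne_iff.mp (hp i k)
  have hcoord := congrFun hc (i, ⟨k, j⟩)
  rw [Finset.sum_apply, Fintype.sum_eq_single (i, ⟨k, hk⟩)] at hcoord
  · simpa [kcol, kvec_self p i hk, hj] using hcoord
  rintro ⟨i', k', hk'⟩ hne
  by_cases hi : i' = i
  · subst hi
    have hkk : k ≠ k' := fun h => hne (by subst h; rfl)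
    simp [kcol, kvec_of_ne p i' hk hkk]
  · simp [kcol, Ne.symm hi]

lemma span_kcol_le_ker (p : Vecr 𝕜 d r n) :
    Submodule.span 𝕜 (Set.range fun z : Fin r × {k : Fin d // k ≠ 0} => kcol p z.1 z.2) ≤
      LinearMap.ker (terracini p).mulVecLin := by
  rw [Submodule.span_le]
  rintro _ ⟨⟨i, k, hk⟩, rfl⟩
  exact terracini_mulVec_kcol p i hk

lemma finrank_span_kcol (p : Vecr 𝕜 d r n) (hp : ∀ i k, p i k ≠ 0) :
    Module.finrank 𝕜 (Submodule.span 𝕜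
      (Set.range fun z : Fin r × {k : Fin d // k ≠ 0} => kcol p z.1 z.2)) = r * (d - 1) := by
  rw [finrank_span_eq_card (linearIndependent_kcol p hp)]
  simp [Fintype.card_subtype_compl]

lemma rank_add_finrank_ker_terracini (hn : ∀ k, n k ≠ 0) (p : Vecr 𝕜 d r n) :
    (terracini p).rank + Module.finrank 𝕜 (LinearMap.ker (terracini p).mulVecLin) =
      r * (∑ k, (n k - 1) + 1) + r * (d - 1) := by
  rw [Matrix.rank, LinearMap.finrank_range_add_finrank_ker, Module.finrank_fintype_fun_eq_card,
    card_colIdx hn, ← mul_add]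
  have := NeZero.one_le (n := d)
  congr 1
  omega

theorem rank_terracini_le (hn : ∀ k, n k ≠ 0) (p : Vecr 𝕜 d r n) (hp : ∀ i k, p i k ≠ 0) :
    (terracini p).rank ≤ r * (∑ k, (n k - 1) + 1) := by
  have hsum := rank_add_finrank_ker_terracini hn p
  have hker := finrank_span_kcol p hp ▸ Submodule.finrank_mono (span_kcol_le_ker p)
  omega

theorem ker_terracini_eq_span_kcol (hn : ∀ k, n k ≠ 0) (p : Vecr 𝕜 d r n)
    (hp : ∀ i k, p i k ≠ 0) (hrank : (terracini p).rank = r * (∑ k, (n k - 1) + 1)) :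
    LinearMap.ker (terracini p).mulVecLin =
      Submodule.span 𝕜 (Set.range fun z : Fin r × {k : Fin d // k ≠ 0} => kcol p z.1 z.2) := by
  refine (Submodule.eq_of_le_of_finrank_le (span_kcol_le_ker p) ?_).symm
  have hsum := rank_add_finrank_ker_terracini hn p
  rw [finrank_span_kcol p hp]
  omega

theorem rank_terraciniBlock_le (hd : 2 ≤ d) (hn : ∀ k, n k ≠ 0) (p : Vecr 𝕜 d r n) (i : Fin r)
    (hbal : ∀ k k', eunorm (p i k) = eunorm (p i k')) :
    (terraciniBlock p i).rank ≤ ∑ k, (n k - 1) + 1 := by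
  by_cases hz : ∃ k, p i k = 0
  · obtain ⟨k₀, hk₀⟩ := hz
    have hi : ∀ k, p i k = 0 := fun k => eunorm_eq_zero.mp (hbal k k₀ ▸ eunorm_eq_zero.mpr hk₀)
    rw [terraciniBlock_eq_zero hd p hi, Matrix.rank_zero]
    omega
  · push Not at hz
    rw [terraciniBlock_eq_submatrix, Matrix.rank_submatrix]
    simpa using rank_terracini_le hn (fun _ : Fin 1 => p i) fun _ => hz

theorem ne_zero_of_rank_terracini_eq (hd : 2 ≤ d) (hn : ∀ k, n k ≠ 0) (p : Vecr 𝕜 d r n)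
    (hbal : ∀ i k k', eunorm (p i k) = eunorm (p i k'))
    (hrank : (terracini p).rank = r * (∑ k, (n k - 1) + 1)) (i : Fin r) (k : Fin d) :
    p i k ≠ 0 := by
  intro hk
  have hi : ∀ k', p i k' = 0 := fun k' => eunorm_eq_zero.mp (hbal i k' k ▸ eunorm_eq_zero.mpr hk)
  have hsum : ∑ i', (terraciniBlock p i').rank ≤ (r - 1) * (∑ k, (n k - 1) + 1) := by
    rw [← Finset.add_sum_erase _ _ (Finset.mem_univ i), terraciniBlock_eq_zero hd p hi,
      Matrix.rank_zero, zero_add]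
    refine (Finset.sum_le_sum fun i' _ => rank_terraciniBlock_le hd hn p i' (hbal i')).trans ?_
    simp
  have hle := hrank ▸ (rank_terracini_le_sum p).trans hsum
  have hlt : (r - 1) * (∑ k, (n k - 1) + 1) < r * (∑ k, (n k - 1) + 1) :=
    Nat.mul_lt_mul_of_pos_right (Nat.sub_lt i.pos one_pos) (Nat.succ_pos _)
  omega

lemma star_kcol_dotProduct_flat (p : Vecr 𝕜 d r n) (i : Fin r) {k : Fin d} (hk : k ≠ 0) :
    star (kcol p i k) ⬝ᵥ flat p = ((eunorm (p i 0) ^ 2 - eunorm (p i k) ^ 2 : ℝ) : 𝕜) := by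
  rw [dotProduct, Fintype.sum_prod_type,
    Fintype.sum_eq_single i (fun i' hi' => by simp [kcol, hi']), ← Finset.univ_sigma_univ,
    Finset.sum_sigma,
    Fintype.sum_eq_add 0 k hk.symm (fun l ⟨hl0, hlk⟩ => by simp [kcol, kvec_of_ne p i hl0 hlk]),
    eunorm_sq, eunorm_sq]
  simp [kcol, kvec_zero, kvec_self p i hk, flat, RCLike.conj_mul, sub_eq_add_neg]

theorem star_dotProduct_flat_eq_zero (hd : 2 ≤ d) (hn : ∀ k, n k ≠ 0) (p : Vecr 𝕜 d r n)
    (hbal : ∀ i k k', eunorm (p i k) = eunorm (p i k'))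
    (hrank : (terracini p).rank = r * (∑ k, (n k - 1) + 1)) {w : ColIdx d r n → 𝕜}
    (hw : terracini p *ᵥ w = 0) : star w ⬝ᵥ flat p = 0 := by
  have hspan : w ∈ Submodule.span 𝕜 (Set.range fun z : Fin r × {k : Fin d // k ≠ 0} =>
      kcol p z.1 z.2) := by
    rw [← ker_terracini_eq_span_kcol hn p (ne_zero_of_rank_terracini_eq hd hn p hbal hrank) hrank]
    exact hw
  clear hw
  induction hspan using Submodule.span_induction with
  | mem _ h =>
    obtain ⟨⟨i, k, hk⟩, rfl⟩ := h
    rw [star_kcol_dotProduct_flat p i hk, hbal i 0 k, sub_self, RCLike.ofReal_zero]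
  | zero => simp
  | add _ _ _ _ hx hy => simp [add_dotProduct, hx, hy]
  | smul _ _ _ hx => simp [smul_dotProduct, hx]

end Terracini

/-- the relative condition number of a (robustly `r`-identifiable)
tensor given by a nonzero norm-balanced representative with full-rank Terracini matrix
is bounded from below by `1/d`. -/
theorem relative_condition_number_lower_bound
    (hd : 2 ≤ d) (hn : ∀ k, 2 ≤ n k) (hr : 1 ≤ r)
    (p : Vecr 𝕜 d r n) (hp : p ≠ 0)
    (hbal : ∀ (i : Fin r) (k k' : Fin d), eunorm (p i k) = eunorm (p i k'))
    (N : ℕ) (hN : N = r * ((∑ k, (n k - 1)) + 1))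
    (hrank : (terracini p).rank = N) :
    (1 : ℝ) / d ≤ (nthSV (terracini p) N)⁻¹ * (tnorm (tmap p) / vnorm p) := by
  have : NeZero d := ⟨by omega⟩
  have hn' : ∀ k, n k ≠ 0 := fun k => by have := hn k; omega
  have hker : ∀ w, terracini p *ᵥ w = 0 → star w ⬝ᵥ flat p = 0 :=
    fun w => star_dotProduct_flat_eq_zero hd hn' p hbal (hrank.trans hN)
  have hbound : nthSV (terracini p) N * vnorm p ≤ d * tnorm (tmap p) := by
    simpa [hrank, terracini_mulVec_flat, eunorm_smul, vnorm_eq_eunorm_flat, tnorm_eq_eunorm]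
      using nthSV_rank_mul_eunorm_le (terracini p) (flat p) hker
  have hσ : 0 < nthSV (terracini p) N := by
    rw [← hrank]
    exact nthSV_rank_pos _ (by rw [hrank, hN]; exact mul_ne_zero (by omega) (Nat.succ_ne_zero _))
  have hv := vnorm_pos hp
  rw [inv_mul_eq_div, div_div, le_div_iff₀ (by positivity), one_div_mul_eq_div,
    div_le_iff₀ (by positivity), mul_comm _ (d : ℝ), mul_comm (vnorm p)]
  exact hbound

end TensorCond
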